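/- For all x, y, z ∈ ℝ with |x| ≤ 1, |y| ≤ 1, |z| ≤ 1 and all ρ ∈ ℝ with |ρ| < 1, one has ∑_{i=0}^{∞} ρ^i · U_i(x) · U_i(y) · U_i(z) = [ (1+ρ²)³ + 16ρ³·xyz − 4ρ²(1+ρ²)(x² + y² + z²) ] / w₃(x,y,z|ρ). -/

import Mathlib

/-!
The sequence `f n = U_n(x) U_n(y) U_n(z)` is a product of three solutions of
`u (n + 2) = 2 t u (n + 1) - u n`, whose characteristic roots are `e^{±iα}`, `e^{±iβ}`, `e^{±iγ}`
for `x = cos α`, `y = cos β`, `z = cos γ`. Hence `f` satisfies the linear recurrence of order 8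
with characteristic roots `e^{i(±α±β±γ)}`, and its reversed characteristic polynomial in `ρ` is
`w₃(x, y, z | ρ)`. Summing the recurrence against `ρ ^ n` shows that `w₃` times the series is a
polynomial in `ρ` determined by `f 0, …, f 7`. Convergence comes from `|U_n| ≤ n + 1`, and the
denominator is positive because it is the product of the four factors `1 - 2ρ cos(α ± β ± γ) + ρ²`.
-/

open Polynomial Finset

theorem HasSum.mul_eq_of_linear_recurrence {R : Type*} [CommRing R] [TopologicalSpace R]
    [IsTopologicalRing R] [T2Space R] {f : ℕ → R} {ρ S : R} {c : ℕ → R} {d : ℕ}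
    (hS : HasSum (fun n ↦ ρ ^ n * f n) S) (hrec : ∀ n, ∑ k ∈ range (d + 1), c k * f (n + k) = 0) :
    (∑ k ∈ range (d + 1), c k * ρ ^ (d - k)) * S =
      ∑ k ∈ range (d + 1), c k * ρ ^ (d - k) * ∑ j ∈ range k, ρ ^ j * f j := by
  have hshift : ∀ k ∈ range (d + 1), HasSum (fun n ↦ c k * ρ ^ (d - k) * (ρ ^ (n + k) * f (n + k)))
      (c k * ρ ^ (d - k) * (S - ∑ j ∈ range k, ρ ^ j * f j)) := fun k _ ↦
    ((hasSum_nat_add_iff' k).mpr hS).mul_left _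
  have hzero : ∀ n, ∑ k ∈ range (d + 1), c k * ρ ^ (d - k) * (ρ ^ (n + k) * f (n + k)) = 0 := by
    intro n
    calc _ = ∑ k ∈ range (d + 1), ρ ^ (n + d) * (c k * f (n + k)) := by
          refine sum_congr rfl fun k hk ↦ ?_
          rw [show n + d = (d - k) + (n + k) by grind, pow_add]
          ring
      _ = 0 := by rw [← mul_sum, hrec, mul_zero]
  have := (hasSum_sum hshift).unique (by simpa only [hzero] using hasSum_zero)
  simp only [mul_sub, sum_sub_distrib, ← sum_mul] at this
  exact sub_eq_zero.mp this

namespace Polynomial.Chebyshev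

theorem eval_U_nat_add_two {R : Type*} [CommRing R] (x : R) (n : ℕ) :
    (U R ((n + 2 : ℕ) : ℤ)).eval x = 2 * x * (U R ((n + 1 : ℕ) : ℤ)).eval x - (U R n).eval x := by
  push_cast
  simp [U_add_two]

theorem abs_eval_U_real_le {x : ℝ} (hx : |x| ≤ 1) (n : ℕ) : |(U ℝ n).eval x| ≤ n + 1 := by
  induction n with
  | zero => simp
  | succ n ih =>
    rw [Nat.cast_succ, U_eq_X_mul_U_add_T, eval_add, eval_mul, eval_X, Nat.cast_succ]
    calc |x * (U ℝ n).eval x + (T ℝ (n + 1)).eval x|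
        ≤ |x| * |(U ℝ n).eval x| + |(T ℝ (n + 1)).eval x| := by
          rw [← abs_mul]; exact abs_add_le _ _
      _ ≤ 1 * (n + 1) + 1 := by
          gcongr
          exact abs_eval_T_real_le_one _ hx
      _ = n + 1 + 1 := by ring

theorem summable_pow_mul_eval_U_mul_eval_U_mul_eval_U {x y z ρ : ℝ} (hx : |x| ≤ 1)
    (hy : |y| ≤ 1) (hz : |z| ≤ 1) (hρ : |ρ| < 1) :
    Summable fun n : ℕ ↦ ρ ^ n * ((U ℝ n).eval x * (U ℝ n).eval y * (U ℝ n).eval z) := by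
  have hr : ‖|ρ|‖ < 1 := by rwa [Real.norm_eq_abs, abs_abs]
  have h k := summable_pow_mul_geometric_of_norm_lt_one k hr
  have hmajorant : Summable fun n : ℕ ↦ ((n : ℝ) + 1) ^ 3 * |ρ| ^ n :=
    ((h 3).add (((h 2).mul_left 3).add (((h 1).mul_left 3).add (h 0)))).congr fun n ↦ by ring
  refine hmajorant.of_norm_bounded fun n ↦ ?_
  rw [Real.norm_eq_abs, abs_mul, abs_pow, abs_mul, abs_mul, mul_comm, pow_three, ← mul_assoc]
  gcongr <;> exact abs_eval_U_real_le ‹_› n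

end Polynomial.Chebyshev

open Polynomial.Chebyshev

section CommRing

variable {R : Type*} [CommRing R]

def w₂ (x y ρ : R) : R :=
  (1 + ρ ^ 2) ^ 2 - 4 * ρ * (1 + ρ ^ 2) * (x * y) + 4 * ρ ^ 2 * (x ^ 2 + y ^ 2 - 1)

def w₃ (x y z ρ : R) : R :=
  16 * ρ ^ 4 * (x ^ 4 + y ^ 4 + z ^ 4) -
    8 * ρ ^ 2 * (1 + ρ ^ 2) ^ 2 * (x ^ 2 + y ^ 2 + z ^ 2) +
    16 * ρ ^ 2 * (1 + ρ ^ 4) * (x ^ 2 * y ^ 2 + x ^ 2 * z ^ 2 + y ^ 2 * z ^ 2) +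
    64 * ρ ^ 4 * x ^ 2 * y ^ 2 * z ^ 2 -
    32 * ρ ^ 3 * (1 + ρ ^ 2) * (x * y * z) * (x ^ 2 + y ^ 2 + z ^ 2) -
    8 * ρ * (1 + ρ ^ 2) * (1 + ρ ^ 4 - 6 * ρ ^ 2) * (x * y * z) + (1 + ρ ^ 2) ^ 4

-- With `x = cos α`, `y = cos β` and `s = sin α sin β`, the two factors are
-- `1 - 2ρ cos(α ∓ β) + ρ²`.
theorem w₂_eq_mul {x y s ρ : R} (hs : s ^ 2 = (1 - x ^ 2) * (1 - y ^ 2)) :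
    w₂ x y ρ = (1 - 2 * ρ * (x * y + s) + ρ ^ 2) * (1 - 2 * ρ * (x * y - s) + ρ ^ 2) := by
  unfold w₂
  linear_combination 4 * ρ ^ 2 * hs

theorem w₃_eq_mul {x y z s ρ : R} (hs : s ^ 2 = (1 - y ^ 2) * (1 - z ^ 2)) :
    w₃ x y z ρ = w₂ x (y * z + s) ρ * w₂ x (y * z - s) ρ := by
  unfold w₂ w₃
  linear_combination ((4 * ρ * (1 + ρ ^ 2) * x - 8 * ρ ^ 2 * (y * z)) ^ 2 -
      8 * ρ ^ 2 * ((1 + ρ ^ 2) ^ 2 - 4 * ρ * (1 + ρ ^ 2) * (x * (y * z)) +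
        4 * ρ ^ 2 * (x ^ 2 + (y * z) ^ 2 - 1)) -
      16 * ρ ^ 4 * (s ^ 2 + (1 - y ^ 2) * (1 - z ^ 2))) * hs

-- The coefficients of `∏ (t - a^{±1} b^{±1} c^{±1})`, where `a + a⁻¹ = 2x`, `b + b⁻¹ = 2y` and
-- `c + c⁻¹ = 2z`.
def w₃Coeff (x y z : R) : ℕ → R
  | 0 | 8 => 1
  | 1 | 7 => -8 * x * y * z
  | 2 | 6 => 4 - 8 * (x ^ 2 + y ^ 2 + z ^ 2) + 16 * (x ^ 2 * y ^ 2 + x ^ 2 * z ^ 2 + y ^ 2 * z ^ 2)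
  | 3 | 5 => 40 * x * y * z - 32 * x * y * z * (x ^ 2 + y ^ 2 + z ^ 2)
  | 4 => 6 - 16 * (x ^ 2 + y ^ 2 + z ^ 2) + 16 * (x ^ 4 + y ^ 4 + z ^ 4) + 64 * x ^ 2 * y ^ 2 * z ^ 2
  | _ => 0

theorem sum_w₃Coeff_mul_pow (x y z ρ : R) :
    ∑ k ∈ range 9, w₃Coeff x y z k * ρ ^ (8 - k) = w₃ x y z ρ := by
  simp only [sum_range_succ, sum_range_zero, w₃Coeff, w₃, Nat.reduceSub]
  ring

section Recurrence

variable {x y z : R} {u v w : ℕ → R}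

theorem sum_w₃Coeff_mul_eq_zero (hu : ∀ n, u (n + 2) = 2 * x * u (n + 1) - u n)
    (hv : ∀ n, v (n + 2) = 2 * y * v (n + 1) - v n)
    (hw : ∀ n, w (n + 2) = 2 * z * w (n + 1) - w n) (n : ℕ) :
    ∑ k ∈ range 9, w₃Coeff x y z k * (u (n + k) * v (n + k) * w (n + k)) = 0 := by
  simp only [sum_range_succ, sum_range_zero, w₃Coeff, add_zero, hu, hv, hw]
  ring

theorem sum_w₃Coeff_mul_sum_range_eq (hu : ∀ n, u (n + 2) = 2 * x * u (n + 1) - u n)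
    (hv : ∀ n, v (n + 2) = 2 * y * v (n + 1) - v n)
    (hw : ∀ n, w (n + 2) = 2 * z * w (n + 1) - w n) (hu₀ : u 0 = 1) (hv₀ : v 0 = 1) (hw₀ : w 0 = 1)
    (hu₁ : u 1 = 2 * x) (hv₁ : v 1 = 2 * y) (hw₁ : w 1 = 2 * z) (ρ : R) :
    ∑ k ∈ range 9, w₃Coeff x y z k * ρ ^ (8 - k) * ∑ j ∈ range k, ρ ^ j * (u j * v j * w j) =
      (1 + ρ ^ 2) ^ 3 + 16 * ρ ^ 3 * (x * y * z) -
        4 * ρ ^ 2 * (1 + ρ ^ 2) * (x ^ 2 + y ^ 2 + z ^ 2) := by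
  simp only [sum_range_succ, sum_range_zero, w₃Coeff, Nat.reduceSub, hu, hv, hw, hu₀, hv₀, hw₀,
    hu₁, hv₁, hw₁]
  ring

end Recurrence

end CommRing

theorem one_sub_sq_nonneg {x : ℝ} (hx : |x| ≤ 1) : 0 ≤ 1 - x ^ 2 :=
  sub_nonneg.mpr ((sq_le_one_iff_abs_le_one x).mpr hx)

theorem abs_mul_add_le_one {a b s : ℝ} (ha : |a| ≤ 1) (hb : |b| ≤ 1)
    (hs : s ^ 2 = (1 - a ^ 2) * (1 - b ^ 2)) : |a * b + s| ≤ 1 := by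
  have hP := mul_nonneg (sq_nonneg a) (one_sub_sq_nonneg hb)
  have hQ := mul_nonneg (sq_nonneg b) (one_sub_sq_nonneg ha)
  -- AM-GM, since `(2 a b s) ^ 2 = 4 (a ^ 2 (1 - b ^ 2)) (b ^ 2 (1 - a ^ 2))`.
  have hamgm : |2 * (a * b * s)| ≤ a ^ 2 * (1 - b ^ 2) + b ^ 2 * (1 - a ^ 2) :=
    abs_le_of_sq_le_sq (by nlinarith [sq_nonneg (a ^ 2 * (1 - b ^ 2) - b ^ 2 * (1 - a ^ 2))])
      (add_nonneg hP hQ)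
  rw [abs_le_one_iff_mul_self_le_one]
  nlinarith [le_abs_self (2 * (a * b * s))]

theorem one_sub_two_mul_add_sq_pos {c ρ : ℝ} (hc : |c| ≤ 1) (hρ : |ρ| < 1) :
    0 < 1 - 2 * ρ * c + ρ ^ 2 := by
  have : ρ * c ≤ |ρ| :=
    calc ρ * c ≤ |ρ| * |c| := (le_abs_self _).trans (abs_mul ρ c).le
      _ ≤ |ρ| := mul_le_of_le_one_right (abs_nonneg ρ) hc
  nlinarith [sq_abs ρ, abs_nonneg ρ]

theorem w₂_pos {x y ρ : ℝ} (hx : |x| ≤ 1) (hy : |y| ≤ 1) (hρ : |ρ| < 1) : 0 < w₂ x y ρ := by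
  set s := √((1 - x ^ 2) * (1 - y ^ 2))
  have hs : s ^ 2 = (1 - x ^ 2) * (1 - y ^ 2) :=
    Real.sq_sqrt (mul_nonneg (one_sub_sq_nonneg hx) (one_sub_sq_nonneg hy))
  rw [w₂_eq_mul hs, sub_eq_add_neg (x * y)]
  exact mul_pos (one_sub_two_mul_add_sq_pos (abs_mul_add_le_one hx hy hs) hρ)
    (one_sub_two_mul_add_sq_pos (abs_mul_add_le_one hx hy (by rwa [neg_sq])) hρ)

theorem w₃_pos {x y z ρ : ℝ} (hx : |x| ≤ 1) (hy : |y| ≤ 1) (hz : |z| ≤ 1) (hρ : |ρ| < 1) :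
    0 < w₃ x y z ρ := by
  set s := √((1 - y ^ 2) * (1 - z ^ 2))
  have hs : s ^ 2 = (1 - y ^ 2) * (1 - z ^ 2) :=
    Real.sq_sqrt (mul_nonneg (one_sub_sq_nonneg hy) (one_sub_sq_nonneg hz))
  rw [w₃_eq_mul hs, sub_eq_add_neg (y * z)]
  exact mul_pos (w₂_pos hx (abs_mul_add_le_one hy hz hs) hρ)
    (w₂_pos hx (abs_mul_add_le_one hy hz (by rwa [neg_sq])) hρ)


theorem chebyshev_U_U_U_gen_fun (x y z ρ : ℝ)
    (hx : |x| ≤ 1) (hy : |y| ≤ 1) (hz : |z| ≤ 1) (hρ : |ρ| < 1) :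
    ∑' i : ℕ, ρ ^ i * (Chebyshev.U ℝ (i : ℤ)).eval x * (Chebyshev.U ℝ (i : ℤ)).eval y *
        (Chebyshev.U ℝ (i : ℤ)).eval z =
      ((1 + ρ ^ 2) ^ 3 + 16 * ρ ^ 3 * (x * y * z) -
          4 * ρ ^ 2 * (1 + ρ ^ 2) * (x ^ 2 + y ^ 2 + z ^ 2)) /
        (16 * ρ ^ 4 * (x ^ 4 + y ^ 4 + z ^ 4) -
          8 * ρ ^ 2 * (1 + ρ ^ 2) ^ 2 * (x ^ 2 + y ^ 2 + z ^ 2) +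
          16 * ρ ^ 2 * (1 + ρ ^ 4) * (x ^ 2 * y ^ 2 + x ^ 2 * z ^ 2 + y ^ 2 * z ^ 2) +
          64 * ρ ^ 4 * x ^ 2 * y ^ 2 * z ^ 2 -
          32 * ρ ^ 3 * (1 + ρ ^ 2) * (x * y * z) * (x ^ 2 + y ^ 2 + z ^ 2) -
          8 * ρ * (1 + ρ ^ 2) * (1 + ρ ^ 4 - 6 * ρ ^ 2) * (x * y * z) + (1 + ρ ^ 2) ^ 4) := by
  have hU (t : ℝ) := eval_U_nat_add_two t
  have hU₀ (t : ℝ) : (U ℝ ((0 : ℕ) : ℤ)).eval t = 1 := by simp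
  have hU₁ (t : ℝ) : (U ℝ ((1 : ℕ) : ℤ)).eval t = 2 * t := by simp
  have key := (summable_pow_mul_eval_U_mul_eval_U_mul_eval_U hx hy hz hρ).hasSum
    |>.mul_eq_of_linear_recurrence (sum_w₃Coeff_mul_eq_zero (u := fun n ↦ (U ℝ n).eval x)
      (v := fun n ↦ (U ℝ n).eval y) (w := fun n ↦ (U ℝ n).eval z) (hU x) (hU y) (hU z))
  rw [sum_w₃Coeff_mul_pow, sum_w₃Coeff_mul_sum_range_eq (hU x) (hU y) (hU z) (hU₀ x) (hU₀ y)
    (hU₀ z) (hU₁ x) (hU₁ y) (hU₁ z)] at key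
  simp only [← mul_assoc] at key
  exact (eq_div_iff (w₃_pos hx hy hz hρ).ne').mpr (by linear_combination key)
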